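/- arXiv:1811.02262 — 2 statements merged into one kernel-verified Lean document; each statement's English description precedes it below -/
import Mathlib

section
/- Let T be the bilateral weighted shift on ℓ²(ℤ) with weight sequence w_n = 1 for n ≤ 0 and w_n = 2 for n ≥ 1. Then T is Cesàro-hypercyclic. -/
open Filter Topology

/-- The space `ℓ²(ℤ)` of square-summable complex sequences indexed by `ℤ`. -/
noncomputable abbrev L2Z : Type := lp (fun _ : ℤ => ℂ) 2

/-- The canonical orthonormal basis vectors of `ℓ²(ℤ)`. -/
noncomputable def eVec (n : ℤ) : L2Z := lp.single 2 n (1 : ℂ)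

/-- `T` is the bilateral weighted shift with weight sequence `w`. -/
def IsBilateralWeightedShift (T : L2Z →L[ℂ] L2Z) (w : ℤ → ℝ) : Prop :=
  ∀ n : ℤ, T (eVec n) = (w n : ℂ) • eVec (n - 1)

/-- `T` is hypercyclic. -/
def Hypercyclic (T : L2Z →L[ℂ] L2Z) : Prop :=
  ∃ x : L2Z, Dense {y : L2Z | ∃ n : ℕ, y = (T ^ n) x}

/-- `T` is supercyclic. -/
def Supercyclic (T : L2Z →L[ℂ] L2Z) : Prop :=
  ∃ x : L2Z, Dense {y : L2Z | ∃ (c : ℂ) (n : ℕ), y = c • (T ^ n) x}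

/-- `T` is Cesàro-hypercyclic. -/
def CesaroHypercyclic (T : L2Z →L[ℂ] L2Z) : Prop :=
  ∃ x : L2Z, Dense {y : L2Z | ∃ n : ℕ, 1 ≤ n ∧ y = ((n : ℂ))⁻¹ • (T ^ n) x}

/-!
A Cesàro analogue of the Hypercyclicity Criterion: if `n⁻¹ Tⁿ → 0` pointwise on a dense set,
and every vector `v` of a dense set is `v = Tⁿ yₙ` with `n yₙ → 0`, then for open `U ∋ u` and
`V ∋ v` the vectors `xₙ = u + n yₙ` eventually lie in `U` with `n⁻¹ Tⁿ xₙ = n⁻¹ Tⁿ u + v ∈ V`,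
and Baire's theorem turns this transitivity into a vector with dense Cesàro orbit.

For the shift, `ρ k = 2 ^ max k 0` satisfies `w k = ρ k / ρ (k - 1)`, so
`Tⁿ e_k = (ρ k / ρ (k - n)) e_{k-n}`. Backwards the products of weights stay bounded, so
`n⁻¹ Tⁿ e_k → 0`; forwards they grow like `2ⁿ`, which beats the factor `n` in `n yₙ`.
-/

lemma norm_smul_eVec (a : ℂ) (k : ℤ) : ‖a • eVec k‖ = ‖a‖ := by
  rw [eVec, ← lp.single_smul, smul_eq_mul, mul_one, lp.norm_single (by norm_num)]

lemma dense_span_eVec : Dense (Submodule.span ℂ (Set.range eVec) : Set L2Z) := by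
  intro f
  refine mem_closure_of_tendsto (lp.hasSum_single (by norm_num) f) (Eventually.of_forall ?_)
  intro s
  refine Submodule.sum_mem _ fun i _ => ?_
  rw [← mul_one (f i), ← smul_eq_mul, lp.single_smul]
  exact Submodule.smul_mem _ _ (Submodule.subset_span ⟨i, rfl⟩)

instance : TopologicalSpace.SeparableSpace L2Z := by
  rw [← TopologicalSpace.isSeparable_univ_iff, ← dense_span_eVec.closure_eq]
  exact (Set.countable_range eVec).isSeparable.span.closure

theorem exists_denseRange_of_transitive {X ι : Type*} [TopologicalSpace X] [BaireSpace X]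
    [SecondCountableTopology X] [Nonempty X] (f : ι → X → X) (hf : ∀ i, Continuous (f i))
    (htrans : ∀ U V : Set X, IsOpen U → IsOpen V → U.Nonempty → V.Nonempty →
      ∃ i, (U ∩ f i ⁻¹' V).Nonempty) :
    ∃ x, DenseRange fun i => f i x := by
  obtain ⟨b, hbc, hbne, hb⟩ := TopologicalSpace.exists_countable_basis X
  have hopen : ∀ B ∈ b, IsOpen (⋃ i, f i ⁻¹' B) := fun B hB =>
    isOpen_iUnion fun i => (hb.isOpen hB).preimage (hf i)
  have hdense : ∀ B ∈ b, Dense (⋃ i, f i ⁻¹' B) := fun B hB =>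
    dense_iff_inter_open.2 fun U hU hUne => by
      obtain ⟨i, x, hxU, hxB⟩ := htrans U B hU (hb.isOpen hB) hUne
        (Set.nonempty_iff_ne_empty.2 fun h => hbne (h ▸ hB))
      exact ⟨x, hxU, Set.mem_iUnion.2 ⟨i, hxB⟩⟩
  obtain ⟨x, hx⟩ := (dense_biInter_of_isOpen hopen hbc hdense).nonempty
  refine ⟨x, hb.dense_iff.2 fun B hB _ => ?_⟩
  obtain ⟨i, hi⟩ := Set.mem_iUnion.1 (Set.mem_iInter₂.1 hx B hB)
  exact ⟨f i x, hi, i, rfl⟩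

section Cesaro

variable {𝕜 E : Type*} [NormedField 𝕜] [AddCommGroup E] [TopologicalSpace E]
  [IsTopologicalAddGroup E] [Module 𝕜 E] [ContinuousSMul 𝕜 E]

def cesaroNullSubmodule (T : E →L[𝕜] E) : Submodule 𝕜 E where
  carrier := {x | Tendsto (fun n : ℕ => (n : 𝕜)⁻¹ • (T ^ n) x) atTop (𝓝 0)}
  zero_mem' := by simpa using tendsto_const_nhds
  add_mem' hx hy := by
    simpa only [Set.mem_ofPred_eq, map_add, smul_add, add_zero] using hx.add hy
  smul_mem' c x hx := by
    simpa only [Set.mem_ofPred_eq, map_smul, smul_comm c, smul_zero] using hx.const_smul c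

def cesaroReachableSubmodule (T : E →L[𝕜] E) : Submodule 𝕜 E where
  carrier := {v | ∃ y : ℕ → E, Tendsto (fun n : ℕ => (n : 𝕜) • y n) atTop (𝓝 0) ∧
    ∀ n, (T ^ n) (y n) = v}
  zero_mem' := ⟨0, by simpa using tendsto_const_nhds, fun n => map_zero _⟩
  add_mem' := by
    rintro _ _ ⟨y, hy, hTy⟩ ⟨z, hz, hTz⟩
    refine ⟨y + z, by simpa only [Pi.add_apply, smul_add, add_zero] using hy.add hz, fun n => ?_⟩
    rw [Pi.add_apply, map_add, hTy, hTz]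
  smul_mem' := by
    rintro c _ ⟨y, hy, hTy⟩
    refine ⟨c • y, by simpa only [Pi.smul_apply, smul_comm c, smul_zero] using hy.const_smul c,
      fun n => ?_⟩
    rw [Pi.smul_apply, map_smul, hTy]

end Cesaro

theorem cesaroHypercyclic_of_dense (T : L2Z →L[ℂ] L2Z)
    (hnull : Dense (cesaroNullSubmodule T : Set L2Z))
    (hreach : Dense (cesaroReachableSubmodule T : Set L2Z)) :
    CesaroHypercyclic T := by
  obtain ⟨x, hx⟩ := exists_denseRange_of_transitive
    (fun n x => ((n + 1 : ℕ) : ℂ)⁻¹ • (T ^ (n + 1)) x)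
    (fun n => by fun_prop) fun U V hU hV hUne hVne => by
      obtain ⟨u, hu, huU⟩ := hnull.exists_mem_open hU hUne
      obtain ⟨v, ⟨y, hy, hTy⟩, hvV⟩ := hreach.exists_mem_open hV hVne
      have hxu : Tendsto (fun n : ℕ => u + (n : ℂ) • y n) atTop (𝓝 u) := by
        simpa using tendsto_const_nhds.add hy
      have hTx : Tendsto (fun n : ℕ => (n : ℂ)⁻¹ • (T ^ n) (u + (n : ℂ) • y n)) atTop (𝓝 v) := by
        have hTu : Tendsto (fun n : ℕ => (n : ℂ)⁻¹ • (T ^ n) u) atTop (𝓝 0) := hu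
        refine (by simpa only [zero_add] using hTu.add_const v : Tendsto _ _ (𝓝 v)).congr' ?_
        filter_upwards [eventually_ne_atTop 0] with n hn
        rw [map_add, map_smul, hTy, smul_add, inv_smul_smul₀ (Nat.cast_ne_zero.2 hn)]
      obtain ⟨N, hN⟩ := eventually_atTop.1
        ((hxu.eventually_mem (hU.mem_nhds huU)).and (hTx.eventually_mem (hV.mem_nhds hvV)))
      exact ⟨N, _, hN (N + 1) N.le_succ⟩
  refine ⟨x, hx.mono ?_⟩
  rintro _ ⟨n, rfl⟩
  exact ⟨n + 1, n.succ_pos, rfl⟩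

namespace IsBilateralWeightedShift

variable {T : L2Z →L[ℂ] L2Z} {w : ℤ → ℝ} {ρ : ℤ → ℝ}

/-- Writing the weights as ratios `w k = ρ k / ρ (k - 1)` makes the products of weights
along an orbit telescope. -/
theorem smul_pow_apply_eVec (hT : IsBilateralWeightedShift T w)
    (hρ : ∀ k, ρ k = w k * ρ (k - 1)) (n : ℕ) (k : ℤ) :
    (ρ (k - n) : ℂ) • (T ^ n) (eVec k) = (ρ k : ℂ) • eVec (k - n) := by
  induction n generalizing k with
  | zero => simp
  | succ n ih =>
    have hk : k - (n + 1 : ℕ) = k - 1 - n := by push_cast; ring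
    rw [pow_succ, mul_apply_eq_comp, hT k, map_smul, hk, smul_comm, ih, smul_smul,
      ← Complex.ofReal_mul, ← hρ]

theorem pow_apply_eVec (hT : IsBilateralWeightedShift T w) (hρ0 : ∀ k, ρ k ≠ 0)
    (hρ : ∀ k, ρ k = w k * ρ (k - 1)) (n : ℕ) (k : ℤ) :
    (T ^ n) (eVec k) = ((ρ k / ρ (k - n) : ℝ) : ℂ) • eVec (k - n) := by
  rw [Complex.ofReal_div, div_eq_inv_mul, mul_smul, ← hT.smul_pow_apply_eVec hρ,
    inv_smul_smul₀ (Complex.ofReal_ne_zero.2 (hρ0 _))]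

theorem eVec_mem_cesaroNullSubmodule (hT : IsBilateralWeightedShift T w) (hρ0 : ∀ k, 0 < ρ k)
    (hρ : ∀ k, ρ k = w k * ρ (k - 1)) {k : ℤ}
    (hlim : Tendsto (fun n : ℕ => ((n : ℝ) * ρ (k - n))⁻¹) atTop (𝓝 0)) :
    eVec k ∈ cesaroNullSubmodule T := by
  change Tendsto (fun n : ℕ => (n : ℂ)⁻¹ • (T ^ n) (eVec k)) atTop (𝓝 0)
  rw [tendsto_zero_iff_norm_tendsto_zero]
  convert hlim.const_mul (ρ k) using 2 with n
  · rw [hT.pow_apply_eVec (fun k => (hρ0 k).ne') hρ, smul_smul, norm_smul_eVec, norm_mul,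
      norm_inv, Complex.norm_natCast, Complex.norm_real,
      Real.norm_of_nonneg (div_pos (hρ0 _) (hρ0 _)).le]
    ring
  · simp

theorem eVec_mem_cesaroReachableSubmodule (hT : IsBilateralWeightedShift T w)
    (hρ0 : ∀ k, 0 < ρ k) (hρ : ∀ k, ρ k = w k * ρ (k - 1)) {k : ℤ}
    (hlim : Tendsto (fun n : ℕ => (n : ℝ) / ρ (k + n)) atTop (𝓝 0)) :
    eVec k ∈ cesaroReachableSubmodule T := by
  refine ⟨fun n => ((ρ k / ρ (k + n) : ℝ) : ℂ) • eVec (k + n), ?_, fun n => ?_⟩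
  · rw [tendsto_zero_iff_norm_tendsto_zero]
    convert hlim.const_mul (ρ k) using 2 with n
    · rw [smul_smul, norm_smul_eVec, norm_mul, Complex.norm_natCast, Complex.norm_real,
        Real.norm_of_nonneg (div_pos (hρ0 _) (hρ0 _)).le]
      ring
    · simp
  · rw [map_smul, hT.pow_apply_eVec (fun k => (hρ0 k).ne') hρ, smul_smul, add_sub_cancel_right,
      ← Complex.ofReal_mul, div_mul_div_cancel₀ (hρ0 _).ne', div_self (hρ0 _).ne',
      Complex.ofReal_one, one_smul]

theorem cesaroHypercyclic (hT : IsBilateralWeightedShift T w) (hρ0 : ∀ k, 0 < ρ k)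
    (hρ : ∀ k, ρ k = w k * ρ (k - 1))
    (hback : ∀ k, Tendsto (fun n : ℕ => ((n : ℝ) * ρ (k - n))⁻¹) atTop (𝓝 0))
    (hfwd : ∀ k, Tendsto (fun n : ℕ => (n : ℝ) / ρ (k + n)) atTop (𝓝 0)) :
    CesaroHypercyclic T := by
  refine cesaroHypercyclic_of_dense T (dense_span_eVec.mono ?_) (dense_span_eVec.mono ?_) <;>
    refine Submodule.span_le.2 (Set.range_subset_iff.2 fun k => ?_)
  exacts [hT.eVec_mem_cesaroNullSubmodule hρ0 hρ (hback k),
    hT.eVec_mem_cesaroReachableSubmodule hρ0 hρ (hfwd k)]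

end IsBilateralWeightedShift

theorem tendsto_inv_natCast_mul_two_pow_toNat_sub (k : ℤ) :
    Tendsto (fun n : ℕ => ((n : ℝ) * 2 ^ (k - n).toNat)⁻¹) atTop (𝓝 0) := by
  refine tendsto_inv_atTop_zero.comp (tendsto_atTop_mono (fun n => ?_) tendsto_natCast_atTop_atTop)
  exact le_mul_of_one_le_right n.cast_nonneg (one_le_pow₀ one_le_two)

theorem tendsto_natCast_div_two_pow_toNat_add (k : ℤ) :
    Tendsto (fun n : ℕ => (n : ℝ) / 2 ^ (k + n).toNat) atTop (𝓝 0) := by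
  have hlim := (tendsto_pow_const_div_const_pow_of_one_lt 1 one_lt_two).const_mul
    ((2 : ℝ) ^ (-k).toNat)
  refine squeeze_zero (fun n => by positivity) (fun n => ?_) (by simpa using hlim)
  have h2n : (2 : ℝ) ^ n ≤ 2 ^ (k + n).toNat * 2 ^ (-k).toNat := by
    rw [← pow_add]; exact pow_le_pow_right₀ one_le_two (by omega)
  rw [mul_div_assoc', div_le_div_iff₀ (by positivity) (by positivity)]
  calc (n : ℝ) * 2 ^ n ≤ n * (2 ^ (k + n).toNat * 2 ^ (-k).toNat) := by gcongr
    _ = 2 ^ (-k).toNat * n * 2 ^ (k + n).toNat := by ring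

theorem example_shift_cesaro_hypercyclic
    (w : ℤ → ℝ) (hw : ∀ n : ℤ, w n = if n ≤ 0 then 1 else 2)
    (T : L2Z →L[ℂ] L2Z) (hT : IsBilateralWeightedShift T w) :
    CesaroHypercyclic T := by
  refine hT.cesaroHypercyclic (ρ := fun k => 2 ^ k.toNat) (fun k => by positivity) (fun k => ?_)
    tendsto_inv_natCast_mul_two_pow_toNat_sub tendsto_natCast_div_two_pow_toNat_add
  rcases le_or_gt k 0 with hk | hk
  · simp [hw, hk, Int.toNat_eq_zero.2 hk, Int.toNat_eq_zero.2 (by omega : k - 1 ≤ 0)]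
  · rw [hw, if_neg hk.not_ge, show k.toNat = (k - 1).toNat + 1 by omega, pow_succ, mul_comm]
end

section
/- Let T be the bilateral weighted shift on ℓ²(ℤ) with weight sequence w_n = 2 for n < 0 and w_n = 1/2 for n ≥ 0. Then T is not Cesàro-hypercyclic. -/
open Filter Topology

/-! Since all weights to the right of `0` equal `1/2`, the `0`-th coordinate of `Tⁿ x` is
`2⁻ⁿ x(n)`, so the `0`-th coordinates of the Cesàro means `n⁻¹ Tⁿ x` stay bounded by `‖x‖`.
A dense set cannot lie in such a slab: it must meet the open set `{y | ‖x‖ < ‖y 0‖}`. -/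

theorem lp.not_dense_of_forall_norm_apply_le {α : Type*} [DecidableEq α] {p : ENNReal}
    [Fact (1 ≤ p)] {s : Set (lp (fun _ : α => ℂ) p)} (m : α) (C : ℝ)
    (hs : ∀ y ∈ s, ‖y m‖ ≤ C) : ¬ Dense s := by
  intro hdense
  have hopen : IsOpen {y : lp (fun _ : α => ℂ) p | C < ‖y m‖} :=
    isOpen_lt continuous_const (lp.lipschitzWith_one_eval p m).continuous.norm
  have hbig : C < ‖lp.single (E := fun _ : α => ℂ) p m ((|C| + 1 : ℝ) : ℂ) m‖ := by
    rw [lp.single_apply_self, Complex.norm_real, Real.norm_eq_abs]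
    linarith [le_abs_self C, le_abs_self (|C| + 1)]
  obtain ⟨y, hys, hy⟩ := hdense.exists_mem_open hopen ⟨_, hbig⟩
  exact (hs y hys).not_gt hy

namespace IsBilateralWeightedShift

variable {T : L2Z →L[ℂ] L2Z} {w : ℤ → ℝ}

theorem apply_apply (hT : IsBilateralWeightedShift T w) (y : L2Z) (m : ℤ) :
    T y m = w (m + 1) * y (m + 1) := by
  have hcomp : (lp.evalCLM ℂ (fun _ : ℤ => ℂ) 2 m).comp T
      = (w (m + 1) : ℂ) • lp.evalCLM ℂ (fun _ : ℤ => ℂ) 2 (m + 1) := by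
    refine lp.ext_continuousLinearMap (by simp) fun i => ContinuousLinearMap.ext_ring ?_
    have hTi := hT i
    simp only [eVec, Complex.coe_smul] at hTi
    by_cases hi : i = m + 1
    · subst hi
      simp [lp.evalCLM, hTi]
    · simp [lp.evalCLM, hTi, hi, show m ≠ i - 1 by omega]
  exact DFunLike.congr_fun hcomp y

theorem pow_apply_apply (hT : IsBilateralWeightedShift T w) (n : ℕ) (y : L2Z) (m : ℤ) :
    (T ^ n) y m = (∏ i ∈ Finset.range n, (w (m + 1 + i) : ℂ)) * y (m + n) := by
  induction n generalizing y with
  | zero => simp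
  | succ k ih =>
    rw [pow_succ, mul_apply_eq_comp, ih, hT.apply_apply, Finset.prod_range_succ]
    push_cast
    ring_nf

theorem norm_pow_apply_le {m : ℤ} (hT : IsBilateralWeightedShift T w)
    (hw : ∀ k, m < k → |w k| ≤ 1) (n : ℕ) (y : L2Z) : ‖(T ^ n) y m‖ ≤ ‖y‖ := by
  rw [hT.pow_apply_apply, norm_mul, Complex.norm_prod]
  calc (∏ i ∈ Finset.range n, ‖(w (m + 1 + i) : ℂ)‖) * ‖y (m + n)‖
      ≤ 1 * ‖y‖ := by
        gcongr
        · exact Finset.prod_le_one (fun _ _ => norm_nonneg _) fun i _ => by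
            rw [Complex.norm_real, Real.norm_eq_abs]; exact hw _ (by omega)
        · exact lp.norm_apply_le_norm two_ne_zero y _
    _ = ‖y‖ := one_mul _

end IsBilateralWeightedShift

theorem example_shift_not_cesaro_hypercyclic
    (w : ℤ → ℝ) (hw : ∀ n : ℤ, w n = if n < 0 then 2 else 1 / 2)
    (T : L2Z →L[ℂ] L2Z) (hT : IsBilateralWeightedShift T w) :
    ¬ CesaroHypercyclic T := by
  rintro ⟨x, hx⟩
  have hw_le_one : ∀ k, 0 < k → |w k| ≤ 1 := fun k hk => by
    rw [hw, if_neg (by omega)]; norm_num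
  refine lp.not_dense_of_forall_norm_apply_le 0 ‖x‖ ?_ hx
  rintro _ ⟨n, -, rfl⟩
  calc ‖(((n : ℂ))⁻¹ • (T ^ n) x) 0‖ = ‖((n : ℂ))⁻¹‖ * ‖(T ^ n) x 0‖ := by
        rw [lp.coeFn_smul, Pi.smul_apply, norm_smul]
    _ ≤ 1 * ‖x‖ := by
        gcongr
        · simpa using Nat.cast_inv_le_one n
        · exact hT.norm_pow_apply_le hw_le_one n x
    _ = ‖x‖ := one_mul _
end
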